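/- arXiv:2301.01854 — 2 statements merged into one kernel-verified Lean document; each statement's English description precedes it below -/
import Mathlib

section
/- Each OLS coefficient has the closed form β̂_i = (q_i^o)^T [I - x_{i+1}(q_{i+1}^o)^T] ··· [I - x_p(q_p^o)^T] y for i = 1,...,p-1, and β̂_p = (q_p^o)^T y, where q_i^o = q_i/⟨q_i,q_i⟩. -/
/-!
Let `r = y - X β̂` be the least-squares residual, orthogonal to every column by the normal
equations, and let `yᵢ = y - ∑_{k > i} β̂ₖ xₖ`. As `qᵢ` is orthogonal to `r` and to the `xₖ` with
`k < i`, while `⟨qᵢ, xᵢ⟩ = ⟨qᵢ, qᵢ⟩`, we get `⟨qᵢᵒ, yᵢ⟩ = β̂ᵢ`. So the factor `I - xᵢ (qᵢᵒ)ᵀ` sends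
`yᵢ` to `yᵢ - β̂ᵢ xᵢ = yᵢ₋₁`, and applying the factors from the right one by one sends `y = y_p`
to `yᵢ`.
-/

open Matrix

/-- Simplified (non-normalized) Gram–Schmidt process. -/
noncomputable def gs {n p : ℕ} (x : Fin p → Fin n → ℝ) (i : Fin p) : Fin n → ℝ :=
  x i - ∑ j : Fin p, if h : j < i then ((gs x j ⬝ᵥ x i) / (gs x j ⬝ᵥ gs x j)) • gs x j else 0
termination_by i.1
decreasing_by exact h

/-- Product of the projection-style factors `[I - x_k (q_k^o)ᵀ]` over indices `k > i`,
taken in increasing index order. -/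
noncomputable def Pprod {n p : ℕ} (x : Fin p → Fin n → ℝ) (i : Fin p) :
    Matrix (Fin n) (Fin n) ℝ :=
  (((List.finRange p).filter (fun k => i < k)).map
    (fun k => (1 : Matrix (Fin n) (Fin n) ℝ) -
      vecMulVec (x k) ((gs x k ⬝ᵥ gs x k)⁻¹ • gs x k))).prod

open InnerProductSpace

section OrderedProduct

variable {ι m R : Type*} [LinearOrder ι] [Fintype m] [DecidableEq m] [CommRing R]

theorem List.prod_map_one_sub_vecMulVec_mulVec (u w : ι → m → R) (c : ι → R) (y : m → R)
    {l : List ι} (hl : l.Pairwise (· < ·))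
    (hc : ∀ a ∈ l, w a ⬝ᵥ (y - ((l.filter (a < ·)).map fun k => c k • u k).sum) = c a) :
    (l.map fun k => 1 - vecMulVec (u k) (w k)).prod *ᵥ y
      = y - (l.map fun k => c k • u k).sum := by
  induction l with
  | nil => simp
  | cons a t ih =>
    obtain ⟨hat, ht⟩ := List.pairwise_cons.mp hl
    have htail : (a :: t).filter (a < ·) = t := by simpa using hat
    have hc_tail :
        ∀ b ∈ t, w b ⬝ᵥ (y - ((t.filter (b < ·)).map fun k => c k • u k).sum) = c b := by
      intro b hb
      simpa [List.filter_cons, (hat b hb).not_gt] using hc b (List.mem_cons_of_mem a hb)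
    have hca := hc a List.mem_cons_self
    rw [htail] at hca
    rw [List.map_cons, List.prod_cons, ← mulVec_mulVec, ih ht hc_tail, sub_mulVec, one_mulVec,
      vecMulVec_mulVec, hca, List.map_cons, List.sum_cons]
    simp only [op_smul_eq_smul]
    abel

end OrderedProduct

theorem List.sum_map_filter_lt_finRange {M : Type*} [AddCommMonoid M] {p : ℕ} (f : Fin p → M)
    (a : Fin p) : (((List.finRange p).filter (a < ·)).map f).sum = ∑ k ∈ Finset.Ioi a, f k := by
  rw [← List.sum_toFinset _ ((List.nodup_finRange p).filter _), List.toFinset_filter,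
    List.toFinset_finRange]
  congr 1
  ext k
  simp

theorem real_inner_toLp_toLp {ι : Type*} [Fintype ι] (v w : ι → ℝ) :
    inner ℝ (WithLp.toLp 2 v : EuclideanSpace ℝ ι) (WithLp.toLp 2 w) = v ⬝ᵥ w := by
  rw [EuclideanSpace.inner_toLp_toLp, star_trivial, dotProduct_comm]

section GramSchmidt

variable {n p : ℕ} (x : Fin p → Fin n → ℝ)

theorem toLp_gs (i : Fin p) :
    WithLp.toLp 2 (gs x i) =
      gramSchmidt ℝ (fun j => WithLp.toLp 2 (x j) : Fin p → EuclideanSpace ℝ (Fin n)) i := by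
  induction i using WellFoundedLT.induction with
  | _ i ih =>
  rw [eq_sub_of_add_eq (gramSchmidt_def'' ℝ _ i).symm, gs, WithLp.toLp_sub, WithLp.toLp_sum]
  simp_rw [apply_dite (WithLp.toLp 2), dite_eq_ite, WithLp.toLp_zero]
  rw [← Finset.sum_filter, Finset.filter_gt_eq_Iio]
  refine congrArg _ (Finset.sum_congr rfl fun j hj => ?_)
  rw [← ih j (Finset.mem_Iio.mp hj), real_inner_toLp_toLp, RCLike.ofReal_real_eq_id, id,
    ← real_inner_self_eq_norm_sq, real_inner_toLp_toLp, WithLp.toLp_smul]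

theorem gs_dotProduct_gs_of_ne {i j : Fin p} (h : i ≠ j) : gs x i ⬝ᵥ gs x j = 0 := by
  rw [← real_inner_toLp_toLp, toLp_gs, toLp_gs]
  exact gramSchmidt_orthogonal ℝ _ h

theorem gs_dotProduct_gs_ne_zero (hx : LinearIndependent ℝ x) (i : Fin p) :
    gs x i ⬝ᵥ gs x i ≠ 0 := by
  have hx' :
      LinearIndependent ℝ (fun j => WithLp.toLp 2 (x j) : Fin p → EuclideanSpace ℝ (Fin n)) :=
    hx.map' (WithLp.linearEquiv 2 ℝ (Fin n → ℝ)).symm.toLinearMap (LinearEquiv.ker _)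
  rw [← real_inner_toLp_toLp, toLp_gs, inner_self_ne_zero]
  exact gramSchmidt_ne_zero i hx'

theorem gs_dotProduct_of_lt {i j : Fin p} (h : i < j) : gs x j ⬝ᵥ x i = 0 := by
  rw [← real_inner_toLp_toLp, toLp_gs]
  exact gramSchmidt_inv_triangular ℝ _ h

theorem gs_dotProduct_self (i : Fin p) : gs x i ⬝ᵥ x i = gs x i ⬝ᵥ gs x i := by
  nth_rw 3 [gs]
  rw [dotProduct_sub, dotProduct_sum, Finset.sum_eq_zero, sub_zero]
  intro j _
  split_ifs with hj
  · rw [dotProduct_smul, gs_dotProduct_gs_of_ne x hj.ne', smul_zero]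
  · exact dotProduct_zero _

theorem gs_dotProduct_eq_zero_of_forall {w : Fin n → ℝ} (hw : ∀ j, x j ⬝ᵥ w = 0) (i : Fin p) :
    gs x i ⬝ᵥ w = 0 := by
  induction i using WellFoundedLT.induction with
  | _ i ih =>
  rw [gs, sub_dotProduct, sum_dotProduct, hw, zero_sub, neg_eq_zero]
  refine Finset.sum_eq_zero fun j _ => ?_
  split_ifs with hj
  · rw [smul_dotProduct, ih j hj, smul_zero]
  · exact zero_dotProduct _

theorem inv_smul_gs_dotProduct_sub_sum_Ioi (hx : LinearIndependent ℝ x) {c : Fin p → ℝ}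
    {y : Fin n → ℝ} (hr : ∀ j, x j ⬝ᵥ (y - ∑ k, c k • x k) = 0) (i : Fin p) :
    ((gs x i ⬝ᵥ gs x i)⁻¹ • gs x i) ⬝ᵥ (y - ∑ k ∈ Finset.Ioi i, c k • x k) = c i := by
  have hsplit : y - ∑ k ∈ Finset.Ioi i, c k • x k =
      (y - ∑ k, c k • x k) + ∑ k with ¬ i < k, c k • x k := by
    rw [← Finset.sum_filter_add_sum_filter_not Finset.univ (i < ·), Finset.filter_lt_eq_Ioi]
    abel
  have hhead : gs x i ⬝ᵥ ∑ k with ¬ i < k, c k • x k = c i * (gs x i ⬝ᵥ gs x i) := by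
    rw [dotProduct_sum, Finset.sum_eq_single i]
    · rw [dotProduct_smul, gs_dotProduct_self, smul_eq_mul]
    · intro k hk hki
      have hki' : k < i := lt_of_le_of_ne (not_lt.mp (Finset.mem_filter.mp hk).2) hki
      rw [dotProduct_smul, gs_dotProduct_of_lt x hki', smul_zero]
    · simp
  rw [smul_dotProduct, hsplit, dotProduct_add, gs_dotProduct_eq_zero_of_forall x hr, zero_add,
    hhead, smul_eq_mul, inv_mul_eq_iff_eq_mul₀ (gs_dotProduct_gs_ne_zero x hx i), mul_comm]

end GramSchmidt

section LeastSquares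

variable {m n R : Type*} [Fintype m] [Fintype n] [DecidableEq n]

theorem Matrix.isUnit_transpose_mul_self [Field R] [LinearOrder R] [IsStrictOrderedRing R]
    {X : Matrix m n R} (hX : LinearIndependent R X.col) : IsUnit (Xᵀ * X) := by
  rw [← mulVec_injective_iff_isUnit, ← coe_mulVecLin, ← LinearMap.ker_eq_bot,
    ker_mulVecLin_transpose_mul_self, LinearMap.ker_eq_bot, coe_mulVecLin, mulVec_injective_iff]
  exact hX

theorem Matrix.transpose_mulVec_sub_mulVec_inv_mul_transpose_mulVec [CommRing R]
    {X : Matrix m n R} (hX : IsUnit (Xᵀ * X)) (y : m → R) :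
    Xᵀ *ᵥ (y - X *ᵥ (((Xᵀ * X)⁻¹ * Xᵀ) *ᵥ y)) = 0 := by
  rw [mulVec_sub, mulVec_mulVec, mulVec_mulVec, ← Matrix.mul_assoc,
    mul_nonsing_inv _ ((isUnit_iff_isUnit_det _).mp hX), Matrix.one_mul, sub_self]

end LeastSquares

theorem coefficients_closed_form {n p : ℕ} (X : Matrix (Fin n) (Fin p) ℝ) (y : Fin n → ℝ)
    (x : Fin p → Fin n → ℝ) (hx : x = fun i k => X k i)
    (hli : LinearIndependent ℝ x)
    (β : Fin p → ℝ) (hβ : β = ((Xᵀ * X)⁻¹ * Xᵀ) *ᵥ y) (i : Fin p) :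
    β i = ((gs x i ⬝ᵥ gs x i)⁻¹ • gs x i) ⬝ᵥ (Pprod x i *ᵥ y) := by
  have hcol : X.col = x := by rw [hx]; rfl
  have hres : ∀ j, x j ⬝ᵥ (y - ∑ k, β k • x k) = 0 := fun j => by
    have hXβ : X *ᵥ β = ∑ k, β k • x k := by simp [mulVec_eq_sum β X, ← hcol, col]
    rw [← hXβ, hβ, ← hcol]
    exact congrFun (X.transpose_mulVec_sub_mulVec_inv_mul_transpose_mulVec
      (X.isUnit_transpose_mul_self (hcol ▸ hli)) y) j
  have hcoeff := inv_smul_gs_dotProduct_sub_sum_Ioi x hli hres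
  rw [Pprod, List.prod_map_one_sub_vecMulVec_mulVec _ _ β y
    ((List.pairwise_lt_finRange p).filter _), List.sum_map_filter_lt_finRange, hcoeff]
  intro a ha
  have hia : i < a := by simpa using ha
  rw [List.filter_filter, List.filter_congr (q := (a < ·)) fun k _ => by
      simpa using fun hak => hia.trans hak,
    List.sum_map_filter_lt_finRange, hcoeff]
end

section
/- The matrix X^+ whose i-th row is x_i^+ = (q_i^o)^T [I - x_{i+1}(q_{i+1}^o)^T] ··· [I - x_p(q_p^o)^T] equals the left generalized (Moore–Penrose left) inverse (X^T X)^{-1} X^T. -/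
open Matrix

/-! Column `x_j` is fixed by every factor `I - x_k (q_k^o)ᵀ` with `k > j`, because `q_k` is
orthogonal to `x_1, …, x_{k-1}`, and is killed by the factor with `k = j`, because
`⟨q_j^o, x_j⟩ = 1`. Hence `x_i^+ x_j` is `⟨q_i^o, x_j⟩ = δ_ij` for `j ≤ i` and `0` for `j > i`,
i.e. `X^+ X = I`. The rows of `X^+` lie in the column space of `X`, so `X^+ = C Xᵀ`, and
`C (XᵀX) = I` forces `C = (XᵀX)⁻¹`. -/

namespace Matrix

theorem eq_inv_mul_transpose_of_mul_eq_one {m n R : Type*} [Fintype m] [Fintype n]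
    [DecidableEq n] [CommRing R] {X : Matrix m n R} {A : Matrix n m R} (hA : A * X = 1)
    (hrow : ∀ i, A i ∈ Submodule.span R (Set.range Xᵀ)) : A = (Xᵀ * X)⁻¹ * Xᵀ := by
  choose C hC using fun i => (Submodule.mem_span_range_iff_exists_fun R).mp (hrow i)
  have hAC : A = of C * Xᵀ := by
    ext i : 1
    rw [mul_apply_eq_vecMul, vecMul_eq_sum, ← hC i]
    rfl
  have hCX : of C * (Xᵀ * X) = 1 := by rw [← Matrix.mul_assoc, ← hAC, hA]
  rw [inv_eq_left_inv hCX, ← hAC]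

end Matrix

section GramSchmidt

variable {n p : ℕ} (x : Fin p → Fin n → ℝ)

theorem gs_add_sum_Iio (i : Fin p) :
    gs x i + ∑ j ∈ Finset.Iio i, ((gs x j ⬝ᵥ x i) / (gs x j ⬝ᵥ gs x j)) • gs x j = x i := by
  rw [gs, ← Finset.filter_gt_eq_Iio]
  simp [Finset.sum_filter]

theorem gs_mem_span_image_Iic (i : Fin p) : gs x i ∈ Submodule.span ℝ (x '' Set.Iic i) := by
  rw [eq_sub_of_add_eq (gs_add_sum_Iio x i)]
  refine Submodule.sub_mem _ (Submodule.subset_span ⟨i, Set.self_mem_Iic, rfl⟩)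
    (Submodule.sum_mem _ fun j hj => ?_)
  have hji : j < i := Finset.mem_Iio.mp hj
  exact Submodule.smul_mem _ _ <| Submodule.span_mono
    (Set.image_mono (Set.Iic_subset_Iic.mpr hji.le)) (gs_mem_span_image_Iic j)
termination_by i.1
decreasing_by exact hji

theorem gs_mem_span_range (i : Fin p) : gs x i ∈ Submodule.span ℝ (Set.range x) :=
  Submodule.span_mono (Set.image_subset_range _ _) (gs_mem_span_image_Iic x i)

theorem sub_gs_mem_span_image_Iio (i : Fin p) :
    x i - gs x i ∈ Submodule.span ℝ (x '' Set.Iio i) := by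
  rw [← gs_add_sum_Iio x i, add_sub_cancel_left]
  refine Submodule.sum_mem _ fun j hj => Submodule.smul_mem _ _ ?_
  exact Submodule.span_mono (Set.image_mono (Set.Iic_subset_Iio.mpr (Finset.mem_Iio.mp hj)))
    (gs_mem_span_image_Iic x j)

theorem gs_ne_zero (hli : LinearIndependent ℝ x) (i : Fin p) : gs x i ≠ 0 := by
  intro h
  have := sub_gs_mem_span_image_Iio x i
  rw [h, sub_zero] at this
  exact hli.notMem_span_image (lt_irrefl i) this

theorem gs_dotProduct_gs_of_lt {i j : Fin p} (hji : j < i) : gs x i ⬝ᵥ gs x j = 0 := by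
  have horth : ∀ k ∈ Finset.Iio i, k ≠ j → gs x k ⬝ᵥ gs x j = 0 := fun k hk hkj => by
    have hki : k < i := Finset.mem_Iio.mp hk
    rcases hkj.lt_or_gt with hkj | hjk
    · rw [dotProduct_comm, gs_dotProduct_gs_of_lt hkj]
    · exact gs_dotProduct_gs_of_lt hjk
  -- Also when `gs x j = 0`, where the division is junk.
  have hj : (gs x j ⬝ᵥ x i) / (gs x j ⬝ᵥ gs x j) * (gs x j ⬝ᵥ gs x j) = gs x j ⬝ᵥ x i :=
    div_mul_cancel_of_imp fun h => by rw [dotProduct_self_eq_zero.mp h, zero_dotProduct]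
  rw [eq_sub_of_add_eq (gs_add_sum_Iio x i), sub_dotProduct, sum_dotProduct,
    Finset.sum_eq_single_of_mem j (Finset.mem_Iio.mpr hji)
      fun k hk hkj => by rw [smul_dotProduct, horth k hk hkj, smul_zero],
    smul_dotProduct, smul_eq_mul, hj, dotProduct_comm, sub_self]
termination_by i.1
decreasing_by all_goals assumption

theorem gs_dotProduct_of_le {i j : Fin p} (hji : j ≤ i) : gs x i ⬝ᵥ x j = gs x i ⬝ᵥ gs x j := by
  rw [← gs_add_sum_Iio x j, dotProduct_add, dotProduct_sum, add_eq_left]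
  refine Finset.sum_eq_zero fun k hk => ?_
  rw [dotProduct_smul, gs_dotProduct_gs_of_lt x ((Finset.mem_Iio.mp hk).trans_le hji), smul_zero]

/-- The vector `q_i^o` of the paper. -/
noncomputable def gsDual (i : Fin p) : Fin n → ℝ := (gs x i ⬝ᵥ gs x i)⁻¹ • gs x i

theorem gsDual_mem_span_range (i : Fin p) : gsDual x i ∈ Submodule.span ℝ (Set.range x) :=
  Submodule.smul_mem _ _ (gs_mem_span_range x i)

theorem gsDual_dotProduct_of_lt {i j : Fin p} (hji : j < i) : gsDual x i ⬝ᵥ x j = 0 := by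
  rw [gsDual, smul_dotProduct, gs_dotProduct_of_le x hji.le, gs_dotProduct_gs_of_lt x hji,
    smul_zero]

theorem gsDual_dotProduct_self {i : Fin p} (hi : gs x i ≠ 0) : gsDual x i ⬝ᵥ x i = 1 := by
  rw [gsDual, smul_dotProduct, gs_dotProduct_of_le x le_rfl, smul_eq_mul,
    inv_mul_cancel₀ (dotProduct_self_eq_zero.not.mpr hi)]

noncomputable def gsFactor (k : Fin p) : Matrix (Fin n) (Fin n) ℝ :=
  1 - vecMulVec (x k) (gsDual x k)

theorem Pprod_eq_prod_gsFactor (i : Fin p) :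
    Pprod x i = (((List.finRange p).filter (i < ·)).map (gsFactor x)).prod :=
  rfl

theorem gsFactor_mulVec (k : Fin p) (v : Fin n → ℝ) :
    gsFactor x k *ᵥ v = v - (gsDual x k ⬝ᵥ v) • x k := by
  rw [gsFactor, sub_mulVec, one_mulVec, vecMulVec_mulVec, op_smul_eq_smul]

theorem vecMul_gsFactor (k : Fin p) (v : Fin n → ℝ) :
    v ᵥ* gsFactor x k = v - (v ⬝ᵥ x k) • gsDual x k := by
  rw [gsFactor, vecMul_sub, vecMul_one, vecMul_vecMulVec]

theorem gsFactor_mulVec_of_lt {j k : Fin p} (hjk : j < k) : gsFactor x k *ᵥ x j = x j := by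
  rw [gsFactor_mulVec, gsDual_dotProduct_of_lt x hjk, zero_smul, sub_zero]

theorem gsFactor_mulVec_self {k : Fin p} (hk : gs x k ≠ 0) : gsFactor x k *ᵥ x k = 0 := by
  rw [gsFactor_mulVec, gsDual_dotProduct_self x hk, one_smul, sub_self]

theorem prod_gsFactor_mulVec_of_forall_lt {l : List (Fin p)} {j : Fin p} (hl : ∀ k ∈ l, j < k) :
    (l.map (gsFactor x)).prod *ᵥ x j = x j := by
  induction l with
  | nil => simp
  | cons k l ih =>
    rw [List.map_cons, List.prod_cons, ← mulVec_mulVec, ih fun m hm => hl m (.tail _ hm),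
      gsFactor_mulVec_of_lt x (hl k List.mem_cons_self)]

theorem prod_gsFactor_mulVec_of_mem (hli : LinearIndependent ℝ x) {l : List (Fin p)} {j : Fin p}
    (hl : l.Pairwise (· < ·)) (hj : j ∈ l) : (l.map (gsFactor x)).prod *ᵥ x j = 0 := by
  induction l with
  | nil => cases hj
  | cons k l ih =>
    rw [List.pairwise_cons] at hl
    rw [List.map_cons, List.prod_cons, ← mulVec_mulVec]
    rcases List.mem_cons.mp hj with rfl | hj
    · rw [prod_gsFactor_mulVec_of_forall_lt x hl.1, gsFactor_mulVec_self x (gs_ne_zero x hli j)]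
    · rw [ih hl.2 hj, mulVec_zero]

theorem vecMul_prod_gsFactor_mem_span {v : Fin n → ℝ} (hv : v ∈ Submodule.span ℝ (Set.range x))
    (l : List (Fin p)) : v ᵥ* (l.map (gsFactor x)).prod ∈ Submodule.span ℝ (Set.range x) := by
  induction l generalizing v with
  | nil => simpa using hv
  | cons k l ih =>
    rw [List.map_cons, List.prod_cons, ← vecMul_vecMul]
    exact ih <| by
      rw [vecMul_gsFactor]
      exact Submodule.sub_mem _ hv (Submodule.smul_mem _ _ (gsDual_mem_span_range x k))

theorem Pprod_mulVec_of_le {i j : Fin p} (hji : j ≤ i) : Pprod x i *ᵥ x j = x j := by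
  rw [Pprod_eq_prod_gsFactor]
  exact prod_gsFactor_mulVec_of_forall_lt x fun _ hk => hji.trans_lt (by simpa using hk)

theorem Pprod_mulVec_of_lt (hli : LinearIndependent ℝ x) {i j : Fin p} (hij : i < j) :
    Pprod x i *ᵥ x j = 0 := by
  rw [Pprod_eq_prod_gsFactor]
  exact prod_gsFactor_mulVec_of_mem x hli
    ((List.pairwise_lt_finRange p).sublist List.filter_sublist) (by simpa using hij)

theorem gsDual_dotProduct_Pprod_mulVec (hli : LinearIndependent ℝ x) (i j : Fin p) :
    gsDual x i ⬝ᵥ (Pprod x i *ᵥ x j) = (1 : Matrix (Fin p) (Fin p) ℝ) i j := by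
  rcases lt_trichotomy j i with hji | rfl | hij
  · rw [Pprod_mulVec_of_le x hji.le, gsDual_dotProduct_of_lt x hji, one_apply_ne hji.ne']
  · rw [Pprod_mulVec_of_le x le_rfl, gsDual_dotProduct_self x (gs_ne_zero x hli j), one_apply_eq]
  · rw [Pprod_mulVec_of_lt x hli hij, dotProduct_zero, one_apply_ne hij.ne]

theorem gsDual_vecMul_Pprod_mem_span (i : Fin p) :
    gsDual x i ᵥ* Pprod x i ∈ Submodule.span ℝ (Set.range x) := by
  rw [Pprod_eq_prod_gsFactor]
  exact vecMul_prod_gsFactor_mem_span x (gsDual_mem_span_range x i) _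

end GramSchmidt

theorem generalized_inverse_closed_form {n p : ℕ} (X : Matrix (Fin n) (Fin p) ℝ)
    (x : Fin p → Fin n → ℝ) (hx : x = fun i k => X k i)
    (hli : LinearIndependent ℝ x)
    (Xplus : Matrix (Fin p) (Fin n) ℝ)
    (hXp : Xplus = Matrix.of fun i k =>
      Matrix.vecMul ((gs x i ⬝ᵥ gs x i)⁻¹ • gs x i) (Pprod x i) k) :
    Xplus = (Xᵀ * X)⁻¹ * Xᵀ := by
  have hxX : x = Xᵀ := hx
  subst hxX hXp
  refine eq_inv_mul_transpose_of_mul_eq_one ?_ (gsDual_vecMul_Pprod_mem_span Xᵀ)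
  ext i j
  rw [mul_apply', ← gsDual_dotProduct_Pprod_mulVec Xᵀ hli, dotProduct_mulVec]
  rfl
end
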